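/- Let n ∈ ℕ and α ∈ (n, n+1). Let X and Y be nonnegative random variables on the same probability space with X ≤ Y almost surely, such that Y is regularly varying with index α and P(X > x) = o(P(Y > x)) as x → ∞. Then E[X^{n+1} e^{-sX}] = o( E[Y^{n+1} e^{-sY}] ) as s → 0⁺. -/

import Mathlib

open MeasureTheory ProbabilityTheory Filter Topology Asymptotics

/-- `tailP P Z x = P(Z > x)` as a real number. -/
noncomputable def tailP {Ω : Type*} [MeasurableSpace Ω] (P : Measure Ω) (Z : Ω → ℝ) (x : ℝ) : ℝ :=
  (P {ω | x < Z ω}).toReal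

/-- A positive measurable function `L` is slowly varying if `L(cx)/L(x) → 1` for every `c > 0`. -/
def SlowlyVarying (L : ℝ → ℝ) : Prop :=
  (∀ x > 0, 0 < L x) ∧ ∀ c > 0, Tendsto (fun x => L (c * x) / L x) atTop (𝓝 1)

/-- A nonnegative random variable `Z` is regularly varying with index `α` if
`P(Z > x) = x^{-α} L(x)` for all `x > 0`, with `L` slowly varying. -/
def RegVarying {Ω : Type*} [MeasurableSpace Ω] (P : Measure Ω) (Z : Ω → ℝ) (α : ℝ) : Prop :=
  ∃ L : ℝ → ℝ, Measurable L ∧ SlowlyVarying L ∧ ∀ x > 0, tailP P Z x = x ^ (-α) * L x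

/-!
By the layer-cake formula, `E[Z^{n+1} e^{-sZ}]` is at most
`tailLaplace n (P(Z > ·)) s = ∫₀^∞ (n+1) z^n e^{-sz} P(Z > z) dz`. Beyond some `A`,
`P(X > z) ≤ ε P(Y > z)`, so the `X`-side is at most `A^{n+1} + ε · tailLaplace n (P(Y > ·)) s`.

Put `T = 1/s`. Regular variation with `α < n + 1` gives `P(Y > x) ≤ K P(Y > 2x)` for large `x`,
with some `K < 2^{n+1}`. Summing over dyadic blocks (Karamata's argument), this makes
`tailLaplace n (P(Y > ·)) s = O(T^{n+1} P(Y > T))`, and it also forces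
`T^{n+1} P(Y > T) → ∞`. Conversely, `0 < α` gives `P(T/2 < Y ≤ T) ≳ P(Y > T)`, so
`E[Y^{n+1} e^{-sY}] ≳ T^{n+1} P(Y > T)`. Hence the `X`-side is `O(1) + O(ε) E[Y^{n+1} e^{-sY}]`,
while `E[Y^{n+1} e^{-sY}] → ∞`.
-/

open Set Real
open scoped Nat

lemma integral_pow_mul_exp_neg_mul_Ioi (n : ℕ) {s : ℝ} (hs : 0 < s) :
    ∫ z in Ioi (0 : ℝ), z ^ n * exp (-s * z) = n ! / s ^ (n + 1) := by
  have h := integral_rpow_mul_exp_neg_mul_Ioi (a := n + 1) (by positivity) hs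
  rw [add_sub_cancel_right, Gamma_nat_eq_factorial, one_div, inv_rpow hs.le,
    ← Nat.cast_add_one, rpow_natCast] at h
  rw [div_eq_inv_mul, ← h]
  refine setIntegral_congr_fun measurableSet_Ioi fun z _ => ?_
  simp [← rpow_natCast, neg_mul]

lemma integrableOn_pow_mul_exp_neg_mul_Ioi (n : ℕ) {s : ℝ} (hs : 0 < s) :
    IntegrableOn (fun z => z ^ n * exp (-s * z)) (Ioi 0) :=
  Integrable.of_integral_ne_zero <| by
    rw [integral_pow_mul_exp_neg_mul_Ioi n hs]; positivity

lemma pow_succ_mul_exp_neg_le_integral (n : ℕ) {s x : ℝ} (hs : 0 ≤ s) (hx : 0 ≤ x) :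
    x ^ (n + 1) * exp (-s * x) ≤ ∫ z in 0..x, (n + 1) * z ^ n * exp (-s * z) := by
  have hpow : ∫ z in 0..x, (n + 1) * z ^ n * exp (-s * x) = x ^ (n + 1) * exp (-s * x) := by
    rw [intervalIntegral.integral_mul_const, intervalIntegral.integral_const_mul, integral_pow]
    field_simp
    simp
  rw [← hpow]
  refine intervalIntegral.integral_mono_on hx (Continuous.intervalIntegrable (by fun_prop) _ _)
    (Continuous.intervalIntegrable (by fun_prop) _ _) fun z ⟨hz0, hzx⟩ => ?_
  have : -s * x ≤ -s * z := by nlinarith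
  gcongr

lemma pow_mul_exp_neg_le (k : ℕ) {s x : ℝ} (hs : 0 < s) (hx : 0 ≤ x) :
    x ^ k * exp (-s * x) ≤ k ! / s ^ k := by
  have h := pow_div_factorial_le_exp (s * x) (mul_nonneg hs.le hx) k
  rw [neg_mul, exp_neg, ← div_eq_mul_inv, div_le_div_iff₀ (exp_pos _) (by positivity)]
  rw [div_le_iff₀ (by positivity), mul_pow] at h
  linarith

noncomputable def tailLaplace (n : ℕ) (t : ℝ → ℝ) (s : ℝ) : ℝ :=
  ∫ z in Ioi 0, (n + 1) * z ^ n * exp (-s * z) * t z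

lemma tailLaplace_nonneg (n : ℕ) {t : ℝ → ℝ} (ht0 : ∀ x, 0 ≤ t x) (s : ℝ) :
    0 ≤ tailLaplace n t s :=
  setIntegral_nonneg measurableSet_Ioi fun z hz => by
    have := pow_nonneg (le_of_lt (mem_Ioi.1 hz)) n
    have := ht0 z
    positivity

lemma geom_mul_le_pow_mul_of_doubling {t : ℝ → ℝ} (k : ℕ) {K x0 : ℝ} (hx0 : 0 < x0)
    (hK0 : 0 < K) (hKt : ∀ x, x0 ≤ x → t x ≤ K * t (2 * x)) (j : ℕ) :
    (2 ^ k / K) ^ j * (x0 ^ k * t x0) ≤ (2 ^ j * x0) ^ k * t (2 ^ j * x0) := by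
  induction j with
  | zero => simp
  | succ j ih =>
    have hj : x0 ≤ 2 ^ j * x0 := le_mul_of_one_le_left hx0.le (one_le_pow₀ one_le_two)
    calc (2 ^ k / K) ^ (j + 1) * (x0 ^ k * t x0)
        = 2 ^ k / K * ((2 ^ k / K) ^ j * (x0 ^ k * t x0)) := by ring
      _ ≤ 2 ^ k / K * ((2 ^ j * x0) ^ k * (K * t (2 * (2 ^ j * x0)))) := by
        refine mul_le_mul_of_nonneg_left (ih.trans ?_) (by positivity)
        exact mul_le_mul_of_nonneg_left (hKt _ hj) (by positivity)
      _ = (2 ^ (j + 1) * x0) ^ k * t (2 ^ (j + 1) * x0) := by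
        simp only [pow_succ, mul_pow]
        field_simp

section Antitone

variable {t : ℝ → ℝ} (ht : Antitone t) (ht0 : ∀ x, 0 ≤ t x)
include ht ht0

lemma Antitone.intervalIntegral_pow_mul_le (n : ℕ) {a b : ℝ} (ha : 0 ≤ a) (hab : a ≤ b) :
    ∫ z in a..b, z ^ n * t z ≤ t a * (b ^ (n + 1) / (n + 1)) := by
  calc ∫ z in a..b, z ^ n * t z ≤ ∫ z in a..b, z ^ n * t a := by
        refine intervalIntegral.integral_mono_on hab
          (ht.intervalIntegrable.continuousOn_mul (continuousOn_pow n))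
          (Continuous.intervalIntegrable (by fun_prop) _ _) fun z ⟨haz, _⟩ => ?_
        have := ht haz
        have := pow_nonneg (ha.trans haz) n
        gcongr
    _ = t a * ((b ^ (n + 1) - a ^ (n + 1)) / (n + 1)) := by
        rw [intervalIntegral.integral_mul_const, integral_pow, mul_comm]
    _ ≤ t a * (b ^ (n + 1) / (n + 1)) := by
        have := ht0 a
        gcongr
        linarith [pow_nonneg ha (n + 1)]

lemma Antitone.intervalIntegral_tailLaplace_integrand_le (n : ℕ) {s T : ℝ} (hs : 0 ≤ s)
    (hT : 0 ≤ T) :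
    ∫ z in 0..T, (n + 1) * z ^ n * exp (-s * z) * t z ≤ (n + 1) * ∫ z in 0..T, z ^ n * t z := by
  rw [← intervalIntegral.integral_const_mul]
  refine intervalIntegral.integral_mono_on hT
    (ht.intervalIntegrable.continuousOn_mul (by fun_prop))
    ((ht.intervalIntegrable.continuousOn_mul (continuousOn_pow n)).const_mul _)
    fun z ⟨hz, _⟩ => ?_
  have : exp (-s * z) ≤ 1 := exp_le_one_iff.2 (by nlinarith)
  have := ht0 z
  calc (n + 1) * z ^ n * exp (-s * z) * t z ≤ (n + 1) * z ^ n * 1 * t z := by gcongr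
    _ = (n + 1) * (z ^ n * t z) := by ring

lemma Antitone.intervalIntegral_pow_mul_le_of_half (n : ℕ) {K C B T : ℝ} (hT : 0 ≤ T)
    (hhalf : t (T / 2) ≤ K * t T) (hC0 : 0 ≤ C) (hC : K / (n + 1) + C * K / 2 ^ (n + 1) ≤ C)
    (ih : ∫ z in 0..T / 2, z ^ n * t z ≤ B + C * ((T / 2) ^ (n + 1) * t (T / 2))) :
    ∫ z in 0..T, z ^ n * t z ≤ B + C * (T ^ (n + 1) * t T) := by
  have := ht0 T
  rw [← intervalIntegral.integral_add_adjacent_intervals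
    (ht.intervalIntegrable.continuousOn_mul (continuousOn_pow n))
    (ht.intervalIntegrable.continuousOn_mul (continuousOn_pow n))]
  calc (∫ z in 0..T / 2, z ^ n * t z) + ∫ z in T / 2..T, z ^ n * t z
      ≤ (B + C * ((T / 2) ^ (n + 1) * t (T / 2))) + t (T / 2) * (T ^ (n + 1) / (n + 1)) :=
        add_le_add ih (ht.intervalIntegral_pow_mul_le ht0 n (by linarith) (by linarith))
    _ ≤ (B + C * ((T / 2) ^ (n + 1) * (K * t T))) + K * t T * (T ^ (n + 1) / (n + 1)) := by
        gcongr
    _ = B + (K / (n + 1) + C * K / 2 ^ (n + 1)) * (T ^ (n + 1) * t T) := by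
        rw [div_pow]; ring
    _ ≤ B + C * (T ^ (n + 1) * t T) := by gcongr

variable (ht1 : ∀ x, t x ≤ 1)
include ht1

lemma Antitone.integrableOn_tailLaplace_integrand (n : ℕ) {s : ℝ} (hs : 0 < s) :
    IntegrableOn (fun z => (n + 1) * z ^ n * exp (-s * z) * t z) (Ioi 0) := by
  have h : IntegrableOn (fun z => (n + 1) * (z ^ n * exp (-s * z) * t z)) (Ioi 0) :=
    ((integrableOn_pow_mul_exp_neg_mul_Ioi n hs).mul_bdd ht.measurable.aestronglyMeasurable
      (c := 1) (Eventually.of_forall fun x => by rw [Real.norm_of_nonneg (ht0 x)]; exact ht1 x)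
      ).const_mul _
  exact h.congr_fun (fun z _ => by ring) measurableSet_Ioi

lemma Antitone.setIntegral_Ioi_inv_tailLaplace_integrand_le (n : ℕ) {s : ℝ} (hs : 0 < s) :
    ∫ z in Ioi s⁻¹, (n + 1) * z ^ n * exp (-s * z) * t z
      ≤ (n + 1)! * (s⁻¹ ^ (n + 1) * t s⁻¹) := by
  have hT : 0 ≤ s⁻¹ := by positivity
  have hexp := integrableOn_pow_mul_exp_neg_mul_Ioi n hs
  calc ∫ z in Ioi s⁻¹, (n + 1) * z ^ n * exp (-s * z) * t z
      ≤ ∫ z in Ioi s⁻¹, (n + 1) * t s⁻¹ * (z ^ n * exp (-s * z)) := by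
        refine setIntegral_mono_on
          ((ht.integrableOn_tailLaplace_integrand ht0 ht1 n hs).mono_set (Ioi_subset_Ioi hT))
          ((hexp.mono_set (Ioi_subset_Ioi hT)).const_mul _) measurableSet_Ioi fun z hz => ?_
        have := ht (le_of_lt hz)
        have := pow_nonneg (hT.trans (le_of_lt hz)) n
        calc (n + 1) * z ^ n * exp (-s * z) * t z
            ≤ (n + 1) * z ^ n * exp (-s * z) * t s⁻¹ := by gcongr
          _ = (n + 1) * t s⁻¹ * (z ^ n * exp (-s * z)) := by ring
    _ ≤ (n + 1) * t s⁻¹ * ∫ z in Ioi 0, z ^ n * exp (-s * z) := by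
        rw [integral_const_mul]
        have := ht0 s⁻¹
        gcongr
        refine (ae_restrict_iff' measurableSet_Ioi).2 (Eventually.of_forall fun z hz => ?_)
        have := pow_nonneg (le_of_lt (mem_Ioi.1 hz)) n
        positivity
    _ = (n + 1)! * (s⁻¹ ^ (n + 1) * t s⁻¹) := by
        rw [integral_pow_mul_exp_neg_mul_Ioi n hs, Nat.factorial_succ, inv_pow]
        push_cast
        ring

lemma Antitone.tailLaplace_le (n : ℕ) {s : ℝ} (hs : 0 < s) :
    tailLaplace n t s
      ≤ (n + 1) * (∫ z in 0..s⁻¹, z ^ n * t z) + (n + 1)! * (s⁻¹ ^ (n + 1) * t s⁻¹) := by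
  have hint := ht.integrableOn_tailLaplace_integrand ht0 ht1 n hs
  have hT : 0 ≤ s⁻¹ := inv_nonneg.2 hs.le
  rw [tailLaplace, ← intervalIntegral.integral_interval_add_Ioi hint
    (hint.mono_set (Ioi_subset_Ioi hT))]
  exact add_le_add (ht.intervalIntegral_tailLaplace_integrand_le ht0 n hs.le hT)
    (ht.setIntegral_Ioi_inv_tailLaplace_integrand_le ht0 ht1 n hs)

theorem Antitone.intervalIntegral_pow_mul_le_of_doubling (n : ℕ) {K C x0 : ℝ} (hx0 : 0 < x0)
    (hKt : ∀ x, x0 ≤ x → t x ≤ K * t (2 * x)) (hC0 : 0 ≤ C)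
    (hC : K / (n + 1) + C * K / 2 ^ (n + 1) ≤ C) {T : ℝ} (hT : 0 ≤ T) :
    ∫ z in 0..T, z ^ n * t z ≤ (2 * x0) ^ (n + 1) / (n + 1) + C * (T ^ (n + 1) * t T) := by
  have hbase (T : ℝ) (hT : 0 ≤ T) (hT2 : T ≤ 2 * x0) :
      ∫ z in 0..T, z ^ n * t z ≤ (2 * x0) ^ (n + 1) / (n + 1) + C * (T ^ (n + 1) * t T) := by
    have := ht0 T
    have := pow_nonneg hT (n + 1)
    calc ∫ z in 0..T, z ^ n * t z ≤ t 0 * (T ^ (n + 1) / (n + 1)) :=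
          ht.intervalIntegral_pow_mul_le ht0 n le_rfl hT
      _ ≤ 1 * ((2 * x0) ^ (n + 1) / (n + 1)) := by gcongr; exact ht1 0
      _ ≤ _ := by rw [one_mul, le_add_iff_nonneg_right]; positivity
  suffices h : ∀ j : ℕ, ∀ T, 0 ≤ T → T ≤ 2 ^ j * x0 →
      ∫ z in 0..T, z ^ n * t z ≤ (2 * x0) ^ (n + 1) / (n + 1) + C * (T ^ (n + 1) * t T) by
    obtain ⟨j, hj⟩ := pow_unbounded_of_one_lt (T / x0) one_lt_two
    exact h j T hT ((div_le_iff₀ hx0).1 hj.le)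
  intro j
  induction j with
  | zero => exact fun T hT hTj => hbase T hT (by linarith)
  | succ j ih =>
    intro T hT hTj
    by_cases hT2 : T ≤ 2 * x0
    · exact hbase T hT hT2
    refine ht.intervalIntegral_pow_mul_le_of_half ht0 n hT ?_ hC0 hC
      (ih _ (by linarith) (by rw [pow_succ] at hTj; linarith))
    simpa [mul_div_cancel₀] using hKt (T / 2) (by linarith)

omit ht1 in
theorem Antitone.tendsto_pow_mul_atTop_of_doubling (k : ℕ) {K x0 : ℝ} (hx0 : 0 < x0)
    (htx0 : 0 < t x0) (hK0 : 0 < K) (hK : K < 2 ^ k)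
    (hKt : ∀ x, x0 ≤ x → t x ≤ K * t (2 * x)) :
    Tendsto (fun x => x ^ k * t x) atTop atTop := by
  have hr : 1 < 2 ^ k / K := (one_lt_div hK0).2 hK
  have ha0 : 0 < x0 ^ k * t x0 := by positivity
  have hx0j (j : ℕ) : x0 ≤ 2 ^ j * x0 := le_mul_of_one_le_left hx0.le (one_le_pow₀ one_le_two)
  rw [tendsto_atTop]
  intro M
  obtain ⟨j0, hj0⟩ := ((tendsto_pow_atTop_atTop_of_one_lt hr).eventually_ge_atTop
    (M * K / (x0 ^ k * t x0))).exists
  filter_upwards [eventually_ge_atTop (2 ^ j0 * x0)] with x hx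
  obtain ⟨j, hjx, hxj⟩ := exists_nat_pow_near ((one_le_div hx0).2 ((hx0j j0).trans hx)) one_lt_two
  rw [le_div_iff₀ hx0] at hjx
  rw [div_lt_iff₀ hx0] at hxj
  have hj0j : j0 ≤ j := by
    by_contra! h
    have : (2 : ℝ) ^ (j + 1) ≤ 2 ^ j0 := pow_le_pow_right₀ one_le_two h
    nlinarith
  calc M ≤ (2 ^ k / K) ^ j0 * (x0 ^ k * t x0) / K := by
        rwa [div_le_iff₀ ha0, ← le_div_iff₀ hK0] at hj0
    _ ≤ (2 ^ k / K) ^ j * (x0 ^ k * t x0) / K := by gcongr; exact hr.le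
    _ ≤ (2 ^ j * x0) ^ k * t (2 ^ j * x0) / K := by
        gcongr ?_ / K
        exact geom_mul_le_pow_mul_of_doubling k hx0 hK0 hKt j
    _ ≤ (2 ^ j * x0) ^ k * t (2 * (2 ^ j * x0)) := by
        rw [div_le_iff₀ hK0, mul_assoc, mul_comm (t _)]
        gcongr
        exact hKt _ (hx0j j)
    _ ≤ x ^ k * t x := by
        have h2x : 2 * (2 ^ j * x0) ≥ x := by rw [pow_succ] at hxj; linarith
        exact mul_le_mul (pow_le_pow_left₀ (by positivity) hjx k) (ht h2x.le) (ht0 _)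
          (pow_nonneg ((by positivity : (0 : ℝ) ≤ 2 ^ j * x0).trans hjx) k)

end Antitone

lemma tailLaplace_le_of_le_mul {u v : ℝ → ℝ} (hu : Antitone u) (hu0 : ∀ x, 0 ≤ u x)
    (hu1 : ∀ x, u x ≤ 1) (hv : Antitone v) (hv0 : ∀ x, 0 ≤ v x) (hv1 : ∀ x, v x ≤ 1)
    {A ε : ℝ} (hA : 0 ≤ A) (hε : 0 ≤ ε) (huv : ∀ x, A ≤ x → u x ≤ ε * v x) (n : ℕ) {s : ℝ}
    (hs : 0 < s) : tailLaplace n u s ≤ A ^ (n + 1) + ε * tailLaplace n v s := by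
  have hiu := hu.integrableOn_tailLaplace_integrand hu0 hu1 n hs
  have hiv := hv.integrableOn_tailLaplace_integrand hv0 hv1 n hs
  rw [tailLaplace, ← intervalIntegral.integral_interval_add_Ioi hiu
    (hiu.mono_set (Ioi_subset_Ioi hA))]
  refine add_le_add ?_ ?_
  · calc ∫ z in 0..A, (n + 1) * z ^ n * exp (-s * z) * u z
        ≤ (n + 1) * ∫ z in 0..A, z ^ n * u z :=
          hu.intervalIntegral_tailLaplace_integrand_le hu0 n hs.le hA
      _ ≤ (n + 1) * (1 * (A ^ (n + 1) / (n + 1))) := by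
          gcongr
          exact (hu.intervalIntegral_pow_mul_le hu0 n le_rfl hA).trans (by gcongr; exact hu1 0)
      _ = A ^ (n + 1) := by field_simp
  · calc ∫ z in Ioi A, (n + 1) * z ^ n * exp (-s * z) * u z
        ≤ ∫ z in Ioi A, ε * ((n + 1) * z ^ n * exp (-s * z) * v z) := by
          refine setIntegral_mono_on (hiu.mono_set (Ioi_subset_Ioi hA))
            ((hiv.mono_set (Ioi_subset_Ioi hA)).const_mul ε) measurableSet_Ioi fun z hz => ?_
          have := pow_nonneg (hA.trans (le_of_lt hz)) n
          calc (n + 1) * z ^ n * exp (-s * z) * u z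
              ≤ (n + 1) * z ^ n * exp (-s * z) * (ε * v z) := by
                gcongr; exact huv z (le_of_lt hz)
            _ = ε * ((n + 1) * z ^ n * exp (-s * z) * v z) := by ring
      _ ≤ ε * tailLaplace n v s := by
          rw [integral_const_mul, tailLaplace]
          gcongr
          refine (ae_restrict_iff' measurableSet_Ioi).2 (Eventually.of_forall fun z hz => ?_)
          have := pow_nonneg (le_of_lt (mem_Ioi.1 hz)) n
          have := hv0 z
          positivity

section tailP

variable {Ω : Type*} [MeasurableSpace Ω] (P : Measure Ω) (Z : Ω → ℝ)

lemma tailP_nonneg (x : ℝ) : 0 ≤ tailP P Z x := ENNReal.toReal_nonneg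

lemma tailP_le_one [IsProbabilityMeasure P] (x : ℝ) : tailP P Z x ≤ 1 := measureReal_le_one

lemma tailP_antitone [IsFiniteMeasure P] : Antitone (tailP P Z) := fun _ _ hab =>
  ENNReal.toReal_mono (measure_ne_top _ _) (measure_mono fun _ h => hab.trans_lt h)

variable {P Z} [IsFiniteMeasure P] (hZ : Measurable Z) (hZnn : ∀ ω, 0 ≤ Z ω)
include hZ hZnn

lemma integral_intervalIntegral_eq_setIntegral_mul_tailP {g : ℝ → ℝ} (hg : Continuous g)
    (hg_nn : ∀ z, 0 ≤ z → 0 ≤ g z) :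
    ∫ ω, (∫ z in 0..Z ω, g z) ∂P = ∫ z in Ioi 0, g z * tailP P Z z := by
  have hprim : Continuous fun x => ∫ z in 0..x, g z :=
    intervalIntegral.continuous_primitive (fun a b => hg.intervalIntegrable a b) 0
  rw [integral_eq_lintegral_of_nonneg_ae, integral_eq_lintegral_of_nonneg_ae,
    lintegral_comp_eq_lintegral_meas_lt_mul P (Eventually.of_forall hZnn) hZ.aemeasurable
      (fun _ _ => hg.intervalIntegrable _ _) ((ae_restrict_iff' measurableSet_Ioi).2
        (Eventually.of_forall fun z hz => hg_nn z (le_of_lt hz)))]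
  · congr 1
    refine setLIntegral_congr_fun measurableSet_Ioi fun z hz => ?_
    rw [ENNReal.ofReal_mul (hg_nn z (le_of_lt hz)), tailP,
      ENNReal.ofReal_toReal (measure_ne_top _ _), mul_comm]
  · exact (ae_restrict_iff' measurableSet_Ioi).2 (Eventually.of_forall fun z hz =>
      mul_nonneg (hg_nn z (le_of_lt hz)) (tailP_nonneg P Z z))
  · exact (hg.measurable.mul (tailP_antitone P Z).measurable).aestronglyMeasurable
  · exact Eventually.of_forall fun ω =>
      intervalIntegral.integral_nonneg (hZnn ω) fun z hz => hg_nn z hz.1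
  · exact (hprim.measurable.comp hZ).aestronglyMeasurable

lemma integral_pow_mul_exp_neg_le_tailLaplace (n : ℕ) {s : ℝ} (hs : 0 < s) :
    ∫ ω, Z ω ^ (n + 1) * exp (-s * Z ω) ∂P ≤ tailLaplace n (tailP P Z) s := by
  set g : ℝ → ℝ := fun z => (n + 1) * z ^ n * exp (-s * z)
  have hg : Continuous g := by fun_prop
  have hg_nn : ∀ z, 0 ≤ z → 0 ≤ g z := fun z hz => by positivity
  have hgi : IntegrableOn g (Ioi 0) := by
    simp only [g, mul_assoc]
    exact (integrableOn_pow_mul_exp_neg_mul_Ioi n hs).const_mul _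
  have hprim : Continuous fun x => ∫ z in 0..x, g z :=
    intervalIntegral.continuous_primitive (fun a b => hg.intervalIntegrable a b) 0
  have hbound (x : ℝ) (hx : 0 ≤ x) : ∫ z in 0..x, g z ≤ ∫ z in Ioi 0, g z := by
    rw [intervalIntegral.integral_of_le hx]
    exact setIntegral_mono_set hgi ((ae_restrict_iff' measurableSet_Ioi).2
      (Eventually.of_forall fun z hz => hg_nn z (le_of_lt hz))) Ioc_subset_Ioi_self.eventuallyLE
  calc ∫ ω, Z ω ^ (n + 1) * exp (-s * Z ω) ∂P ≤ ∫ ω, (∫ z in 0..Z ω, g z) ∂P := by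
        refine integral_mono_of_nonneg (Eventually.of_forall fun ω => by have := hZnn ω; positivity)
          (Integrable.of_bound (hprim.measurable.comp hZ).aestronglyMeasurable (∫ z in Ioi 0, g z)
            (Eventually.of_forall fun ω => ?_))
          (Eventually.of_forall fun ω => pow_succ_mul_exp_neg_le_integral n hs.le (hZnn ω))
        rw [Real.norm_of_nonneg
          (intervalIntegral.integral_nonneg (hZnn ω) fun z hz => hg_nn z hz.1)]
        exact hbound _ (hZnn ω)
    _ = tailLaplace n (tailP P Z) s :=
        integral_intervalIntegral_eq_setIntegral_mul_tailP hZ hZnn hg hg_nn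

lemma integrable_pow_mul_exp_neg (k : ℕ) {s : ℝ} (hs : 0 < s) :
    Integrable (fun ω => Z ω ^ k * exp (-s * Z ω)) P :=
  Integrable.of_bound (by fun_prop) (k ! / s ^ k) (Eventually.of_forall fun ω => by
    rw [Real.norm_of_nonneg (by have := hZnn ω; positivity)]
    exact pow_mul_exp_neg_le k hs (hZnn ω))

lemma pow_mul_sub_tailP_le_integral (n : ℕ) {s : ℝ} (hs : 0 < s) :
    (s⁻¹ / 2) ^ (n + 1) * exp (-1) * (tailP P Z (s⁻¹ / 2) - tailP P Z s⁻¹)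
      ≤ ∫ ω, Z ω ^ (n + 1) * exp (-s * Z ω) ∂P := by
  set E := {ω | s⁻¹ / 2 < Z ω} \ {ω | s⁻¹ < Z ω}
  have hsub : {ω | s⁻¹ < Z ω} ⊆ {ω | s⁻¹ / 2 < Z ω} := fun ω (h : s⁻¹ < Z ω) =>
    show s⁻¹ / 2 < Z ω by linarith [inv_pos.2 hs]
  have hPE : P.real E = tailP P Z (s⁻¹ / 2) - tailP P Z s⁻¹ :=
    measureReal_sdiff hsub (measurableSet_lt measurable_const hZ)
  have hbound (ω : Ω) (hω : ω ∈ E) :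
      (s⁻¹ / 2) ^ (n + 1) * exp (-1) ≤ Z ω ^ (n + 1) * exp (-s * Z ω) := by
    obtain ⟨h1 : s⁻¹ / 2 < Z ω, h2⟩ := hω
    have h2 : Z ω ≤ s⁻¹ := not_lt.1 h2
    have : -1 ≤ -s * Z ω := by
      have := mul_le_mul_of_nonneg_left h2 hs.le
      rw [mul_inv_cancel₀ hs.ne'] at this
      linarith
    have := le_of_lt h1
    have := hZnn ω
    gcongr
  calc (s⁻¹ / 2) ^ (n + 1) * exp (-1) * (tailP P Z (s⁻¹ / 2) - tailP P Z s⁻¹)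
      ≤ ∫ ω in E, Z ω ^ (n + 1) * exp (-s * Z ω) ∂P := by
        rw [← hPE]
        exact setIntegral_ge_of_const_le_real
          ((measurableSet_lt measurable_const hZ).diff (measurableSet_lt measurable_const hZ))
          (measure_ne_top P E) hbound (integrable_pow_mul_exp_neg hZ hZnn _ hs).integrableOn
    _ ≤ ∫ ω, Z ω ^ (n + 1) * exp (-s * Z ω) ∂P :=
        setIntegral_le_integral (integrable_pow_mul_exp_neg hZ hZnn _ hs)
          (Eventually.of_forall fun ω => by have := hZnn ω; positivity)

end tailP

lemma isLittleO_of_forall_le_const_add_mul {α : Type*} {l : Filter α} {N G D : α → ℝ}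
    (hGD : G =O[l] D) (hD : Tendsto (fun x => ‖D x‖) l atTop)
    (hN : ∀ ε > 0, ∃ B, ∀ᶠ x in l, ‖N x‖ ≤ B + ε * ‖G x‖) : N =o[l] D := by
  obtain ⟨c₀, hc₀, hG⟩ := hGD.exists_pos
  refine IsLittleO.of_bound fun c hc => ?_
  obtain ⟨B, hB⟩ := hN (c / (2 * c₀)) (by positivity)
  have hBD := (isLittleO_const_left.2 (Or.inr hD) : (fun _ => B) =o[l] D).def (half_pos hc)
  filter_upwards [hB, hBD, hG.bound] with x hNx hBx hGx
  calc ‖N x‖ ≤ B + c / (2 * c₀) * ‖G x‖ := hNx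
    _ ≤ c / 2 * ‖D x‖ + c / (2 * c₀) * (c₀ * ‖D x‖) := by
        gcongr
        exact (le_abs_self B).trans hBx
    _ = c * ‖D x‖ := by field_simp; ring

namespace RegVarying

variable {Ω : Type*} [MeasurableSpace Ω] {P : Measure Ω} {Y : Ω → ℝ} {α : ℝ}
  (hY : RegVarying P Y α)
include hY

lemma tailP_pos {x : ℝ} (hx : 0 < x) : 0 < tailP P Y x := by
  obtain ⟨L, -, ⟨hLpos, -⟩, hL⟩ := hY
  rw [hL x hx]
  exact mul_pos (rpow_pos_of_pos hx _) (hLpos x hx)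

lemma tendsto_tailP_mul_div {c : ℝ} (hc : 0 < c) :
    Tendsto (fun x => tailP P Y (c * x) / tailP P Y x) atTop (𝓝 (c ^ (-α))) := by
  obtain ⟨L, -, ⟨hLpos, hLslow⟩, hL⟩ := hY
  have h := (hLslow c hc).const_mul (c ^ (-α))
  rw [mul_one] at h
  refine h.congr' ?_
  filter_upwards [eventually_gt_atTop 0] with x hx
  rw [hL x hx, hL (c * x) (mul_pos hc hx), mul_rpow hc.le hx.le]
  have := (rpow_pos_of_pos hx (-α)).ne'
  have := (hLpos x hx).ne'
  field_simp

lemma eventually_tailP_le_mul_tailP_two_mul {K : ℝ} (hK : 2 ^ α < K) :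
    ∀ᶠ x in atTop, tailP P Y x ≤ K * tailP P Y (2 * x) := by
  have hK0 : 0 < K := (rpow_pos_of_pos two_pos α).trans hK
  have hlim : K⁻¹ < 2 ^ (-α) := by
    rw [rpow_neg two_pos.le]
    exact inv_strictAnti₀ (by positivity) hK
  filter_upwards [(hY.tendsto_tailP_mul_div two_pos).eventually_const_lt hlim,
    eventually_gt_atTop 0] with x h hx
  rw [lt_div_iff₀ (hY.tailP_pos hx), inv_mul_lt_iff₀ hK0] at h
  exact h.le

lemma eventually_mul_tailP_le_tailP_half_sub {c : ℝ} (hc : c < 2 ^ α - 1) :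
    ∀ᶠ x in atTop, c * tailP P Y x ≤ tailP P Y (x / 2) - tailP P Y x := by
  have h := hY.tendsto_tailP_mul_div (c := 2⁻¹) (by norm_num)
  rw [inv_rpow two_pos.le, rpow_neg two_pos.le, inv_inv] at h
  filter_upwards [h.eventually_const_lt (by linarith : c + 1 < 2 ^ α),
    eventually_gt_atTop 0] with x h hx
  rw [lt_div_iff₀ (hY.tailP_pos hx), inv_mul_eq_div] at h
  linarith

lemma exists_tailP_le_mul_tailP_two_mul {n : ℕ} (hα : α < n + 1) :
    ∃ K x0 : ℝ, 0 < K ∧ K < 2 ^ (n + 1) ∧ 0 < x0 ∧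
      ∀ x, x0 ≤ x → tailP P Y x ≤ K * tailP P Y (2 * x) := by
  have h2 : (2 : ℝ) ^ α < 2 ^ (n + 1) := by
    rw [← rpow_natCast]
    push_cast
    exact rpow_lt_rpow_of_exponent_lt one_lt_two hα
  obtain ⟨K, hαK, hKn⟩ := exists_between h2
  obtain ⟨x0, hx0⟩ := eventually_atTop.1
    ((hY.eventually_tailP_le_mul_tailP_two_mul hαK).and (eventually_gt_atTop 0))
  exact ⟨K, x0, (rpow_pos_of_pos two_pos α).trans hαK, hKn, (hx0 x0 le_rfl).2,
    fun x hx => (hx0 x hx).1⟩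

lemma tendsto_pow_mul_tailP [IsFiniteMeasure P] {n : ℕ} (hα : α < n + 1) :
    Tendsto (fun x => x ^ (n + 1) * tailP P Y x) atTop atTop := by
  obtain ⟨K, x0, hK0, hK, hx0, hKt⟩ := hY.exists_tailP_le_mul_tailP_two_mul hα
  exact (tailP_antitone P Y).tendsto_pow_mul_atTop_of_doubling (tailP_nonneg P Y) _ hx0
    (hY.tailP_pos hx0) hK0 hK hKt

lemma tailLaplace_isBigO [IsProbabilityMeasure P] {n : ℕ} (hα : α < n + 1) :
    tailLaplace n (tailP P Y) =O[𝓝[>] 0] fun s => s⁻¹ ^ (n + 1) * tailP P Y s⁻¹ := by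
  obtain ⟨K, x0, hK0, hK, hx0, hKt⟩ := hY.exists_tailP_le_mul_tailP_two_mul hα
  have hK' : 0 < (2 : ℝ) ^ (n + 1) - K := sub_pos.2 hK
  set C := K * 2 ^ (n + 1) / ((n + 1) * (2 ^ (n + 1) - K))
  have hC0 : 0 ≤ C := by positivity
  have hC : K / (n + 1) + C * K / 2 ^ (n + 1) ≤ C := by
    refine le_of_eq ?_
    simp only [C]
    field_simp
    ring
  set B := (2 * x0) ^ (n + 1) / (n + 1)
  refine IsBigO.of_bound ((n + 1) * B + ((n + 1) * C + (n + 1)!)) ?_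
  filter_upwards [tendsto_inv_nhdsGT_zero.eventually
    ((hY.tendsto_pow_mul_tailP hα).eventually_ge_atTop 1), self_mem_nhdsWithin] with s ha hs
  have hT : 0 ≤ s⁻¹ := inv_nonneg.2 (le_of_lt hs)
  have hKar := (tailP_antitone P Y).intervalIntegral_pow_mul_le_of_doubling (tailP_nonneg P Y)
    (tailP_le_one P Y) n hx0 hKt hC0 hC hT
  have hG := (tailP_antitone P Y).tailLaplace_le (tailP_nonneg P Y) (tailP_le_one P Y) n hs
  rw [Real.norm_of_nonneg (tailLaplace_nonneg n (tailP_nonneg P Y) s),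
    Real.norm_of_nonneg (by linarith)]
  calc tailLaplace n (tailP P Y) s
      ≤ (n + 1) * (B + C * (s⁻¹ ^ (n + 1) * tailP P Y s⁻¹))
        + (n + 1)! * (s⁻¹ ^ (n + 1) * tailP P Y s⁻¹) := hG.trans (by gcongr)
    _ ≤ _ := by
      nlinarith [mul_le_mul_of_nonneg_left ha (by positivity : 0 ≤ (n + 1) * B)]

lemma pow_mul_tailP_isBigO_integral [IsFiniteMeasure P] (hα : 0 < α) (hYm : Measurable Y)
    (hYnn : ∀ ω, 0 ≤ Y ω) (n : ℕ) :
    (fun s => s⁻¹ ^ (n + 1) * tailP P Y s⁻¹)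
      =O[𝓝[>] 0] fun s => ∫ ω, Y ω ^ (n + 1) * exp (-s * Y ω) ∂P := by
  obtain ⟨c, hc0, hc⟩ := exists_between (sub_pos.2 (one_lt_rpow one_lt_two hα))
  refine IsBigO.of_bound (2 ^ (n + 1) * exp 1 / c) ?_
  filter_upwards [tendsto_inv_nhdsGT_zero.eventually
    (hY.eventually_mul_tailP_le_tailP_half_sub hc), self_mem_nhdsWithin] with s hdiff hs
  have hs' : 0 < s⁻¹ := inv_pos.2 (mem_Ioi.1 hs)
  have hlow := pow_mul_sub_tailP_le_integral (P := P) hYm hYnn n hs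
  have ht := tailP_nonneg P Y s⁻¹
  have hD : 0 ≤ ∫ ω, Y ω ^ (n + 1) * exp (-s * Y ω) ∂P :=
    integral_nonneg fun ω => by have := hYnn ω; positivity
  rw [Real.norm_of_nonneg (by positivity), Real.norm_of_nonneg hD]
  calc s⁻¹ ^ (n + 1) * tailP P Y s⁻¹
      = 2 ^ (n + 1) * exp 1 / c * ((s⁻¹ / 2) ^ (n + 1) * exp (-1) * (c * tailP P Y s⁻¹)) := by
        rw [div_pow, exp_neg]
        field_simp
    _ ≤ 2 ^ (n + 1) * exp 1 / c
        * ((s⁻¹ / 2) ^ (n + 1) * exp (-1) * (tailP P Y (s⁻¹ / 2) - tailP P Y s⁻¹)) := by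
        gcongr
    _ ≤ _ := by gcongr

lemma tendsto_norm_integral_pow_mul_exp_neg [IsFiniteMeasure P] {n : ℕ} (hα0 : 0 < α)
    (hα : α < n + 1) (hYm : Measurable Y) (hYnn : ∀ ω, 0 ≤ Y ω) :
    Tendsto (fun s => ‖∫ ω, Y ω ^ (n + 1) * exp (-s * Y ω) ∂P‖) (𝓝[>] 0) atTop := by
  have h := tendsto_norm_atTop_atTop.comp <|
    (hY.tendsto_pow_mul_tailP hα).comp tendsto_inv_nhdsGT_zero
  exact (isLittleO_one_left_iff ℝ).1 <| ((isLittleO_one_left_iff ℝ).2 h).trans_isBigO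
    (hY.pow_mul_tailP_isBigO_integral hα0 hYm hYnn n)

end RegVarying

theorem laplace_deriv_negligible_general
    {Ω : Type*} [MeasurableSpace Ω] (P : Measure Ω) [IsProbabilityMeasure P]
    (n : ℕ) (α : ℝ) (hα1 : (n : ℝ) < α) (hα2 : α < n + 1)
    (X Y : Ω → ℝ) (hXmeas : Measurable X) (hYmeas : Measurable Y)
    (hXnn : ∀ ω, 0 ≤ X ω) (hYnn : ∀ ω, 0 ≤ Y ω)
    (hYrv : RegVarying P Y α)
    (hXo : (fun x => tailP P X x) =o[atTop] fun x => tailP P Y x) :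
    (fun s => ∫ ω, X ω ^ (n + 1) * Real.exp (-s * X ω) ∂P)
      =o[𝓝[>] (0 : ℝ)] fun s => ∫ ω, Y ω ^ (n + 1) * Real.exp (-s * Y ω) ∂P := by
  have hα0 : 0 < α := (Nat.cast_nonneg n).trans_lt hα1
  refine isLittleO_of_forall_le_const_add_mul
    ((hYrv.tailLaplace_isBigO hα2).trans (hYrv.pow_mul_tailP_isBigO_integral hα0 hYmeas hYnn n))
    (hYrv.tendsto_norm_integral_pow_mul_exp_neg hα0 hα2 hYmeas hYnn) fun ε hε => ?_
  obtain ⟨A, hA⟩ := eventually_atTop.1 (hXo.def hε)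
  refine ⟨max A 0 ^ (n + 1), eventually_mem_nhdsWithin.mono fun s hs => ?_⟩
  rw [Real.norm_of_nonneg (integral_nonneg fun ω => by have := hXnn ω; positivity),
    Real.norm_of_nonneg (tailLaplace_nonneg n (tailP_nonneg P Y) s)]
  refine (integral_pow_mul_exp_neg_le_tailLaplace hXmeas hXnn n hs).trans ?_
  refine tailLaplace_le_of_le_mul (tailP_antitone P X) (tailP_nonneg P X)
    (tailP_le_one P X) (tailP_antitone P Y) (tailP_nonneg P Y) (tailP_le_one P Y)
    (le_max_right A 0) hε.le (fun x hx => ?_) n hs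
  simpa [Real.norm_of_nonneg (tailP_nonneg P _ _)] using hA x ((le_max_left A 0).trans hx)

/-- Lemma B.1 of the paper: if `X ≤ Y` a.s., `Y` is regularly varying with index
`α ∈ (n, n+1)` and `P(X > x) = o(P(Y > x))`, then
`E[X^{n+1} e^{-sX}] = o(E[Y^{n+1} e^{-sY}])` as `s → 0⁺`. -/
theorem laplace_deriv_negligible
    {Ω : Type*} [MeasurableSpace Ω] (P : Measure Ω) [IsProbabilityMeasure P]
    (n : ℕ) (α : ℝ) (hα1 : (n : ℝ) < α) (hα2 : α < n + 1)
    (X Y : Ω → ℝ) (hXmeas : Measurable X) (hYmeas : Measurable Y)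
    (hXnn : ∀ ω, 0 ≤ X ω) (hYnn : ∀ ω, 0 ≤ Y ω)
    (hle : ∀ᵐ ω ∂P, X ω ≤ Y ω)
    (hYrv : RegVarying P Y α)
    (hXo : (fun x => tailP P X x) =o[atTop] fun x => tailP P Y x) :
    (fun s => ∫ ω, X ω ^ (n + 1) * Real.exp (-s * X ω) ∂P)
      =o[𝓝[>] (0 : ℝ)] fun s => ∫ ω, Y ω ^ (n + 1) * Real.exp (-s * Y ω) ∂P :=
  laplace_deriv_negligible_general P n α hα1 hα2 X Y hXmeas hYmeas hXnn hYnn hYrv hXo
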